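/- LP duality for AV@R: for α ∈ (0,1], X ∈ ℝ^n, and probability vector π with positive entries, max{ μᵀX : Σμ_i = 1, 0 ≤ αμ ≤ π } = min{ t + α^{-1} Σ_i π_i max(X_i − t, 0) : t ∈ ℝ } (the Rockafellar–Uryasev representation). -/

import Mathlib

/-!
Weak duality is termwise: `μ i * X i ≤ μ i * t + α⁻¹ * π i * max (X i - t) 0` because
`0 ≤ μ i ≤ α⁻¹ * π i`. Equality is reached at an `α`-quantile `t` of `X` under `π`, i.e. a point
with `π {X > t} ≤ α ≤ π {X ≥ t}`: the measure `μ = π * w / α`, where the weight `w` is `1` on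
`{X > t}`, `0` on `{X < t}` and tops up the mass to `α` on `{X = t}`, is feasible and satisfies
complementary slackness `w * (X - t) = max (X - t) 0`.
-/

open Finset

theorem csSup_eq_csInf_of_mem_of_forall_le {L : Type*} [ConditionallyCompleteLattice L]
    {S T : Set L} {v : L} (hvS : v ∈ S) (hvT : v ∈ T)
    (h : ∀ s ∈ S, ∀ t ∈ T, s ≤ t) : sSup S = sInf T := by
  rw [IsGreatest.csSup_eq ⟨hvS, fun s hs => h s hs v hvT⟩,
    IsLeast.csInf_eq ⟨hvT, fun t ht => h v hvS t ht⟩]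

section AVaR

variable {ι : Type*} [Fintype ι] (π X : ι → ℝ) {α : ℝ}

theorem sum_mul_le_add_inv_mul_sum_mul_max (hα : 0 < α) {μ : ι → ℝ} (hμ : ∑ i, μ i = 1)
    (hμπ : ∀ i, 0 ≤ α * μ i ∧ α * μ i ≤ π i) (t : ℝ) :
    ∑ i, μ i * X i ≤ t + α⁻¹ * ∑ i, π i * max (X i - t) 0 := by
  have hterm : ∀ i, μ i * X i ≤ μ i * t + α⁻¹ * (π i * max (X i - t) 0) := by
    intro i
    have hμ0 : 0 ≤ μ i := nonneg_of_mul_nonneg_right (hμπ i).1 hα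
    have hμle : μ i ≤ α⁻¹ * π i := by
      rw [inv_mul_eq_div, le_div_iff₀ hα, mul_comm]
      exact (hμπ i).2
    calc μ i * X i = μ i * t + μ i * (X i - t) := by ring
      _ ≤ μ i * t + μ i * max (X i - t) 0 := by gcongr; exact le_max_left _ _
      _ ≤ μ i * t + α⁻¹ * π i * max (X i - t) 0 := by gcongr
      _ = μ i * t + α⁻¹ * (π i * max (X i - t) 0) := by ring
  calc ∑ i, μ i * X i ≤ ∑ i, (μ i * t + α⁻¹ * (π i * max (X i - t) 0)) :=
        sum_le_sum fun i _ => hterm i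
    _ = t + α⁻¹ * ∑ i, π i * max (X i - t) 0 := by
        rw [sum_add_distrib, ← sum_mul, hμ, one_mul, mul_sum]

theorem exists_quantile (hα0 : 0 ≤ α) (hα1 : α ≤ ∑ i, π i) :
    ∃ t, ∑ j with t < X j, π j ≤ α ∧ α ≤ ∑ j with t ≤ X j, π j := by
  rcases isEmpty_or_nonempty ι with hι | hι
  · exact ⟨0, by simp [hα0], by simpa using hα1⟩
  obtain ⟨imax, -, hmax⟩ := exists_max_image univ X univ_nonempty
  have hcand : ({i | ∑ j with X i < X j, π j ≤ α} : Finset ι).Nonempty :=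
    ⟨imax, by simpa [filter_false_of_mem fun j _ => not_lt.mpr (hmax j (mem_univ j))] using hα0⟩
  -- `t` is the least value `X i₀` with `π {X > X i₀} ≤ α`; if `π {X ≥ t} < α`, the largest value
  -- `X k` below `t` would have `π {X > X k} = π {X ≥ t} ≤ α`, contradicting minimality.
  obtain ⟨i₀, hi₀, hmin⟩ := exists_min_image _ X hcand
  refine ⟨X i₀, (mem_filter.mp hi₀).2, ?_⟩
  by_contra! hsmall
  rcases ({j | X j < X i₀} : Finset ι).eq_empty_or_nonempty with hbelow | hbelow
  · have hall : univ.filter (fun j => X i₀ ≤ X j) = univ :=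
      filter_true_of_mem fun j _ => not_lt.mp fun hj => filter_eq_empty_iff.mp hbelow (mem_univ j) hj
    rw [hall] at hsmall
    linarith
  · obtain ⟨k, hk, hkmax⟩ := exists_max_image _ X hbelow
    have hk' : X k < X i₀ := (mem_filter.mp hk).2
    have hset : univ.filter (fun j => X i₀ ≤ X j) = univ.filter (fun j => X k < X j) := by
      ext j
      simp only [mem_filter, mem_univ, true_and]
      refine ⟨hk'.trans_le, fun hkj => not_lt.mp fun hj => ?_⟩
      exact absurd (hkmax j (mem_filter.mpr ⟨mem_univ j, hj⟩)) (not_le.mpr hkj)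
    exact (hmin k (mem_filter.mpr ⟨mem_univ k, by rw [← hset]; exact hsmall.le⟩)).not_gt hk'

theorem exists_weight_of_quantile {t : ℝ} (hlt : ∑ j with t < X j, π j ≤ α)
    (hle : α ≤ ∑ j with t ≤ X j, π j) :
    ∃ w : ι → ℝ, (∀ i, 0 ≤ w i ∧ w i ≤ 1) ∧ ∑ i, π i * w i = α ∧
      ∀ i, w i * (X i - t) = max (X i - t) 0 := by
  set P := ∑ j with t < X j, π j
  set Q := ∑ j with X j = t, π j
  have hsplit : ∑ j with t ≤ X j, π j = P + Q := by
    simp only [P, Q, sum_filter, ← sum_add_distrib]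
    refine sum_congr rfl fun j _ => ?_
    rcases lt_trichotomy (X j) t with h | h | h
    · simp [h.not_ge, h.not_gt, h.ne]
    · simp [h]
    · simp [h, h.le, h.ne']
  have hP : 0 ≤ α - P := sub_nonneg.mpr hlt
  have hPQ : α - P ≤ Q := by linarith
  have hcQ : (α - P) / Q * Q = α - P := by
    rcases eq_or_ne Q 0 with hQ | hQ
    · rw [hQ, div_zero, zero_mul]
      linarith
    · exact div_mul_cancel₀ _ hQ
  set c := (α - P) / Q
  refine ⟨fun i => if t < X i then 1 else if X i = t then c else 0, fun i => ?_, ?_, fun i => ?_⟩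
  · have hc : 0 ≤ c ∧ c ≤ 1 :=
      ⟨div_nonneg hP (hP.trans hPQ), div_le_one_of_le₀ hPQ (hP.trans hPQ)⟩
    dsimp only
    split_ifs <;> simp [hc]
  · have hterm : ∀ i, π i * (if t < X i then 1 else if X i = t then c else 0) =
        (if t < X i then π i else 0) + c * (if X i = t then π i else 0) := fun i => by
      rcases lt_trichotomy (X i) t with h | h | h
      · simp [h.not_gt, h.ne]
      · simp [h, mul_comm]
      · simp [h, h.ne']
    simp only [hterm, sum_add_distrib, ← mul_sum, ← sum_filter]
    linarith
  · rcases lt_trichotomy (X i) t with h | h | h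
    · simp [h.not_gt, h.ne, h.le]
    · simp [h]
    · simp [h, h.le]

theorem exists_optimal_pair (hπ : ∀ i, 0 ≤ π i) (hα : 0 < α) (hα1 : α ≤ ∑ i, π i) :
    ∃ μ : ι → ℝ, ∃ t : ℝ, ∑ i, μ i = 1 ∧ (∀ i, 0 ≤ α * μ i ∧ α * μ i ≤ π i) ∧
      ∑ i, μ i * X i = t + α⁻¹ * ∑ i, π i * max (X i - t) 0 := by
  obtain ⟨t, hlt, hle⟩ := exists_quantile π X hα.le hα1
  obtain ⟨w, hw01, hwsum, hslack⟩ := exists_weight_of_quantile π X hlt hle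
  have hαμ : ∀ i, α * (π i * w i / α) = π i * w i := fun i => by field_simp
  refine ⟨fun i => π i * w i / α, t, ?_, fun i => ?_, ?_⟩
  · rw [← sum_div, hwsum, div_self hα.ne']
  · rw [hαμ]
    exact ⟨mul_nonneg (hπ i) (hw01 i).1, mul_le_of_le_one_right (hπ i) (hw01 i).2⟩
  · calc ∑ i, π i * w i / α * X i
          = ∑ i, (π i * w i / α * t + α⁻¹ * (π i * (w i * (X i - t)))) :=
            sum_congr rfl fun i _ => by field_simp; ring
      _ = t + α⁻¹ * ∑ i, π i * max (X i - t) 0 := by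
            simp only [hslack]
            rw [sum_add_distrib, ← sum_mul, ← sum_div, hwsum, div_self hα.ne', one_mul, mul_sum]

end AVaR

/-- Rockafellar–Uryasev / LP duality for AV@R:
max{μᵀX : Σμ = 1, 0 ≤ αμ ≤ π} = min{t + α⁻¹ Σ π_i max(X_i − t, 0) : t ∈ ℝ}. -/
theorem avar_lp_duality (n : ℕ) (π X : Fin n → ℝ)
    (hπ : ∀ i, 0 < π i) (hπsum : ∑ i, π i = 1)
    (α : ℝ) (hα : 0 < α) (hα1 : α ≤ 1) :
    sSup {v : ℝ | ∃ μ : Fin n → ℝ, (∑ i, μ i = 1) ∧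
        (∀ i, 0 ≤ α * μ i ∧ α * μ i ≤ π i) ∧ v = ∑ i, μ i * X i}
    = sInf {v : ℝ | ∃ t : ℝ, v = t + α⁻¹ * ∑ i, π i * max (X i - t) 0} := by
  obtain ⟨μ, t, hμ, hμπ, hopt⟩ :=
    exists_optimal_pair π X (fun i => (hπ i).le) hα (hπsum ▸ hα1)
  refine csSup_eq_csInf_of_mem_of_forall_le ⟨μ, hμ, hμπ, rfl⟩ ⟨t, hopt⟩ ?_
  rintro _ ⟨ν, hν, hνπ, rfl⟩ _ ⟨s, rfl⟩
  exact sum_mul_le_add_inv_mul_sum_mul_max π X hα hν hνπ s
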